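/- Let L₀ δ(y) = −δ''(y) − (2/y − y/2)·δ'(y) + (2/y²)·δ(y), p₁(y) = √(2+y²)/(√2·y) and p₂(y) = (2+y²)^{5/2}/(3√2·y·(4+y²)). Then L₀(1/p₁) = 1/p₂ on (0,∞). -/

import Mathlib

noncomputable def p₁ (y : ℝ) : ℝ := Real.sqrt (2 + y^2) / (Real.sqrt 2 * y)

noncomputable def p₂ (y : ℝ) : ℝ :=
  (2 + y^2) ^ ((5:ℝ)/2) / (3 * Real.sqrt 2 * y * (4 + y^2))

/-! Since `1 / p₁ y = √2 y / √(2 + y²)`, multiplying both sides by `y (2 + y²)^{5/2} / √2` turns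
the identity into the polynomial one `6y² − (4 − y²)(2 + y²) + 2(2 + y²)² = 3y²(4 + y²)`. -/

open Real

lemma hasDerivAt_sqrt_const_add_sq {c : ℝ} (hc : 0 < c) (t : ℝ) :
    HasDerivAt (fun t => √(c + t ^ 2)) (t / √(c + t ^ 2)) t := by
  have hpos : 0 < c + t ^ 2 := by positivity
  convert ((hasDerivAt_pow 2 t).const_add c).sqrt hpos.ne' using 1
  field_simp
  ring

lemma hasDerivAt_const_add_sq_mul_sqrt {c : ℝ} (hc : 0 < c) (t : ℝ) :
    HasDerivAt (fun t => (c + t ^ 2) * √(c + t ^ 2)) (3 * t * √(c + t ^ 2)) t := by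
  have hs : √(c + t ^ 2) ^ 2 = c + t ^ 2 := sq_sqrt (by positivity)
  refine (((hasDerivAt_pow 2 t).const_add c).mul
    (hasDerivAt_sqrt_const_add_sq hc t)).congr_deriv ?_
  have : √(c + t ^ 2) ≠ 0 := by positivity
  field_simp
  rw [hs]
  ring

lemma deriv_mul_div_sqrt_const_add_sq {c : ℝ} (hc : 0 < c) (a : ℝ) :
    deriv (fun t => a * t / √(c + t ^ 2)) = fun t => a * c / ((c + t ^ 2) * √(c + t ^ 2)) := by
  funext t
  have hs : √(c + t ^ 2) ^ 2 = c + t ^ 2 := sq_sqrt (by positivity)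
  have hne : √(c + t ^ 2) ≠ 0 := by positivity
  refine (((hasDerivAt_id' t).const_mul a).div
    (hasDerivAt_sqrt_const_add_sq hc t) hne).congr_deriv ?_ |>.deriv
  field_simp
  rw [hs]
  ring

lemma deriv_deriv_mul_div_sqrt_const_add_sq {c : ℝ} (hc : 0 < c) (a t : ℝ) :
    deriv (deriv (fun t => a * t / √(c + t ^ 2))) t
      = -(3 * a * c * t) / ((c + t ^ 2) ^ 2 * √(c + t ^ 2)) := by
  have hne : (c + t ^ 2) * √(c + t ^ 2) ≠ 0 := by positivity
  rw [deriv_mul_div_sqrt_const_add_sq hc]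
  refine ((hasDerivAt_const t (a * c)).div
    (hasDerivAt_const_add_sq_mul_sqrt hc t) hne).congr_deriv ?_ |>.deriv
  field_simp
  ring

lemma one_div_p₁ : (fun t => 1 / p₁ t) = fun t => √2 * t / √(2 + t ^ 2) := by
  funext t
  rw [p₁, one_div_div]

lemma rpow_five_halves {x : ℝ} (hx : 0 ≤ x) : x ^ ((5 : ℝ) / 2) = x ^ 2 * √x := by
  rw [show (5 : ℝ) / 2 = (2 : ℕ) + 1 / 2 by norm_num, rpow_add' hx (by norm_num),
    rpow_natCast, sqrt_eq_rpow]

theorem L0_inv_p1 (y : ℝ) (hy : 0 < y) :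
    -(deriv (deriv (fun t => 1 / p₁ t)) y)
      - (2/y - y/2) * deriv (fun t => 1 / p₁ t) y
      + (2/y^2) * (1 / p₁ y) = 1 / p₂ y := by
  have hc : (0 : ℝ) < 2 := two_pos
  rw [show 1 / p₁ y = (fun t => 1 / p₁ t) y from rfl, one_div_p₁,
    deriv_deriv_mul_div_sqrt_const_add_sq hc, deriv_mul_div_sqrt_const_add_sq hc, p₂,
    rpow_five_halves (by positivity)]
  have : √(2 + y ^ 2) ≠ 0 := by positivity
  field_simp
  ring
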